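/- Let M be a matroid on a finite ground set E and let ω ∈ ℝ^E. Then ω lies in the Bergman fan B̃(M) if and only if for every r ∈ ℝ the sublevel set {e ∈ E : ω_e ≤ r} is a flat of M. -/

import Mathlib

open scoped Classical

variable {α : Type*}

/-- The ω-weight of a set of elements: the sum of ω over the set. -/
noncomputable def wSum (ω : α → ℝ) (B : Set α) : ℝ := ∑ᶠ e ∈ B, ω e

/-- `B` is an ω-minimum basis of `M`: a basis whose ω-weight is minimum among all bases. -/
def IsMinBase [Fintype α] (M : Matroid α) (ω : α → ℝ) (B : Set α) : Prop :=
  M.IsBase B ∧ ∀ B' : Set α, M.IsBase B' → wSum ω B ≤ wSum ω B'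

/-- `ω` lies in the Bergman fan of `M`: every element lies in some ω-minimum basis. -/
def InBergmanFan [Fintype α] (M : Matroid α) (ω : α → ℝ) : Prop :=
  ∀ e : α, ∃ B : Set α, IsMinBase M ω B ∧ e ∈ B

/-- `C` is a circuit of `M`: a minimal dependent set. -/
def IsCircuit (M : Matroid α) (C : Set α) : Prop := Minimal M.Dep C

/-- A cocircuit of `M` is a circuit of the dual matroid `M✶`. -/
def IsCocircuit (M : Matroid α) (C : Set α) : Prop := IsCircuit M✶ C

/-!
Both directions are a single basis exchange. If every element lies in a minimum basis and
`e ∈ cl {ω ≤ r}` with `ω e > r`, then a minimum basis `B ∋ e` can trade `e` for an element of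
the sublevel set outside `cl (B - e)`, lowering the weight. Conversely, if the sublevel sets are
flats, then `e` is not spanned by the strictly lighter elements, so the fundamental circuit of
`e` in a minimum basis `B` contains some `f` with `ω f ≥ ω e`, and `B - f + e` is again minimum.
-/

open Set

lemma exists_setOf_lt_eq_setOf_le {β : Type*} [Finite α] [LinearOrder β] [NoMinOrder β]
    (ω : α → β) (t : β) : ∃ r < t, {x | ω x < t} = {x | ω x ≤ r} := by
  rcases {x | ω x < t}.eq_empty_or_nonempty with hempty | hne
  · obtain ⟨r, hr⟩ := exists_lt t
    refine ⟨r, hr, hempty.trans (eq_empty_of_forall_notMem fun x hx => ?_).symm⟩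
    exact hempty.subset (lt_of_le_of_lt hx hr)
  · obtain ⟨a, ha, hmax⟩ := exists_max_image _ ω (toFinite _) hne
    exact ⟨ω a, ha, ext fun x => ⟨hmax x, fun hx => lt_of_le_of_lt hx ha⟩⟩

lemma wSum_insert_sdiff_singleton (ω : α → ℝ) {B : Set α} {e f : α} (hB : B.Finite)
    (he : e ∈ B) (hf : f ∉ B \ {e}) :
    wSum ω (insert f (B \ {e})) = wSum ω B - ω e + ω f := by
  have hsplit : ω e + wSum ω (B \ {e}) = wSum ω B := by
    rw [wSum, wSum, ← finsum_mem_add_sdiff (singleton_subset_iff.2 he) hB, finsum_mem_singleton]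
  rw [wSum, finsum_mem_insert _ hf hB.sdiff, ← wSum]
  linarith

namespace Matroid

variable {M : Matroid α} {B S : Set α} {e : α}

lemma IsBase.exists_isBase_insert_sdiff_of_mem_closure (hB : M.IsBase B) (he : e ∈ B)
    (heS : e ∈ M.closure S) : ∃ f ∈ S \ (B \ {e}), M.IsBase (insert f (B \ {e})) := by
  by_contra! hno
  have hS : S ∩ M.E ⊆ M.closure (B \ {e}) := fun f ⟨hfS, hfE⟩ => by
    by_contra hf
    exact hno f ⟨hfS, fun hfB => hf (M.subset_closure _ (sdiff_subset.trans hB.subset_ground) hfB)⟩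
      (hB.exchange_base_of_notMem_closure he hf)
  rw [← closure_inter_ground] at heS
  exact hB.indep.notMem_closure_sdiff_of_mem he (closure_subset_closure_of_subset_closure hS heS)

lemma IsBase.exists_isBase_insert_sdiff_of_notMem_closure (hB : M.IsBase B) (heE : e ∈ M.E)
    (heB : e ∉ B) (heS : e ∉ M.closure S) : ∃ f ∈ B \ S, M.IsBase (insert e (B \ {f})) := by
  have hC := hB.fundCircuit_isCircuit heE heB
  have hCB : M.fundCircuit e B \ {e} ⊆ B := by
    rw [fundCircuit_sdiff_eq_inter _ heB]
    exact inter_subset_right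
  have hecl := hC.mem_closure_sdiff_singleton_of_mem (M.mem_fundCircuit e B)
  obtain ⟨f, hfC, hfS⟩ := not_subset.1 fun hsub => heS (M.closure_subset_closure hsub hecl)
  have hfe : f ≠ e := hfC.2
  have hfB : f ∈ B := hCB hfC
  have hindep := (hB.indep.mem_fundCircuit_iff (by rwa [hB.closure_eq]) heB).1 hfC.1
  rw [← insert_sdiff_singleton_comm hfe.symm] at hindep
  exact ⟨f, ⟨hfB, hfS⟩, hB.exchange_isBase_of_indep heB hindep⟩

end Matroid

section MinBase

variable [Fintype α] {M : Matroid α} {ω : α → ℝ} {B : Set α} {e f : α}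

lemma exists_isMinBase (M : Matroid α) (ω : α → ℝ) : ∃ B, IsMinBase M ω B := by
  obtain ⟨B, hB, hmin⟩ := exists_min_image {B | M.IsBase B} (wSum ω) (toFinite _) M.exists_isBase
  exact ⟨B, hB, hmin⟩

lemma IsMinBase.le_of_isBase_insert_sdiff (hB : IsMinBase M ω B) (he : e ∈ B)
    (hf : f ∉ B \ {e}) (hB' : M.IsBase (insert f (B \ {e}))) : ω e ≤ ω f := by
  have := hB.2 _ hB'
  rw [wSum_insert_sdiff_singleton ω (toFinite B) he hf] at this
  linarith

lemma IsMinBase.insert_sdiff (hB : IsMinBase M ω B) (hf : f ∈ B) (he : e ∉ B)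
    (hB' : M.IsBase (insert e (B \ {f}))) (hef : ω e ≤ ω f) :
    IsMinBase M ω (insert e (B \ {f})) := by
  refine ⟨hB', fun B'' hB'' => le_trans ?_ (hB.2 B'' hB'')⟩
  rw [wSum_insert_sdiff_singleton ω (toFinite B) hf fun h => he h.1]
  linarith

end MinBase

/-- ω lies in the Bergman fan of M iff for every r ∈ ℝ the sublevel
set {e : ω_e ≤ r} is a flat of M (i.e. is equal to its closure). -/
theorem stmt11 [Fintype α] (M : Matroid α) (hE : M.E = Set.univ) (ω : α → ℝ) :
    InBergmanFan M ω ↔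
      ∀ r : ℝ, M.closure {e : α | ω e ≤ r} = {e : α | ω e ≤ r} := by
  constructor
  · intro hfan r
    refine subset_antisymm (fun e he => ?_) (M.subset_closure _ (hE ▸ subset_univ _))
    by_contra hre
    rw [mem_ofPred_eq, not_le] at hre
    obtain ⟨B, hB, heB⟩ := hfan e
    obtain ⟨f, ⟨hfr, hfB⟩, hB'⟩ := hB.1.exists_isBase_insert_sdiff_of_mem_closure heB he
    exact (hB.le_of_isBase_insert_sdiff heB hfB hB').not_gt (lt_of_le_of_lt hfr hre)
  · intro hflat e
    obtain ⟨B, hB⟩ := exists_isMinBase M ω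
    by_cases heB : e ∈ B
    · exact ⟨B, hB, heB⟩
    obtain ⟨r, hre, hlt⟩ := exists_setOf_lt_eq_setOf_le ω (ω e)
    have hecl : e ∉ M.closure {x | ω x < ω e} := by
      rw [hlt, hflat r]
      exact hre.not_ge
    obtain ⟨f, ⟨hfB, hef⟩, hB'⟩ :=
      hB.1.exists_isBase_insert_sdiff_of_notMem_closure (hE ▸ mem_univ e) heB hecl
    exact ⟨_, hB.insert_sdiff hfB heB hB' (not_lt.1 hef), mem_insert _ _⟩
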